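/- (Stable homomorphisms out of the trivial module compute Margolis homology.) Let M be an R-module, and regard 𝔽₂ as an R-module via the quotient map R → R/(x) ≅ 𝔽₂. An R-linear map f : 𝔽₂ → M factors through a free R-module if and only if f(1) ∈ x·M. Consequently, the quotient of Hom_R(𝔽₂, M) by the subspace of maps factoring through a free R-module is 𝔽₂-linearly isomorphic to the Margolis homology H(M). -/

import Mathlib

/-!
Evaluation at `1` identifies `Hom_R(𝔽₂, M)` with `ker x`. In `R` itself `ker x = x R`, and this
exactness passes to every free module `F`; so if `f` factors as `𝔽₂ → F → M`, the image of `1`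
in `F` is some `x w`, and `f 1 ∈ x M`. Conversely, if `f 1 = x m` then `f` factors through `R`
as `1 ↦ x ↦ x m`. Hence evaluation at `1` carries the maps factoring through free modules onto
`x M ⊆ ker x`, and passing to quotients gives `H(M)`.
-/

noncomputable section

open Polynomial CategoryTheory

/-- The exterior algebra `R = 𝔽₂[X]/(X²)` on one generator over `𝔽₂`. -/
abbrev ExtR : Type := AdjoinRoot (X ^ 2 : (ZMod 2)[X])

/-- The class `x` of `X` in `R = 𝔽₂[X]/(X²)`; it satisfies `x² = 0`. -/
abbrev xcl : ExtR := AdjoinRoot.root _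

/-- Multiplication by `x`, as a linear endomorphism of an `R`-module `M`. -/
def mulX (M : Type*) [AddCommGroup M] [Module ExtR M] : M →ₗ[ExtR] M :=
  LinearMap.lsmul ExtR M xcl

/-- The Margolis homology `H(M) = ker(x·) / range(x·)` of an `R`-module `M`. -/
abbrev MargH (M : Type*) [AddCommGroup M] [Module ExtR M] : Type _ :=
  LinearMap.ker (mulX M) ⧸
    (LinearMap.range (mulX M)).comap (LinearMap.ker (mulX M)).subtype

/-- The field `𝔽₂`, regarded as an `R`-module via the quotient map `R → R/(x) ≅ 𝔽₂`. -/
abbrev F2R : Type := ExtR ⧸ Ideal.span {xcl}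

/-- The subspace of `Hom_R(𝔽₂, M)` consisting of the maps that factor through
a free `R`-module. -/
def freeFactor (M : Type) [AddCommGroup M] [Module ExtR M] :
    Submodule ExtR (F2R →ₗ[ExtR] M) where
  carrier := {f | ∃ F : ModuleCat ExtR, Module.Free ExtR F ∧
      ∃ (g : F2R →ₗ[ExtR] F) (h : F →ₗ[ExtR] M), h ∘ₗ g = f}
  add_mem' := by
    rintro f₁ f₂ ⟨F₁, hF₁, g₁, h₁, rfl⟩ ⟨F₂, hF₂, g₂, h₂, rfl⟩
    haveI := hF₁; haveI := hF₂
    refine ⟨ModuleCat.of ExtR (F₁ × F₂), inferInstanceAs (Module.Free ExtR (F₁ × F₂)),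
      g₁.prod g₂, h₁.comp (LinearMap.fst _ _ _) + h₂.comp (LinearMap.snd _ _ _), ?_⟩
    apply LinearMap.ext; intro c
    rfl
  zero_mem' :=
    ⟨ModuleCat.of ExtR ExtR, inferInstanceAs (Module.Free ExtR ExtR), 0, 0, by simp⟩
  smul_mem' := by
    rintro r f ⟨F, hF, g, h, rfl⟩
    exact ⟨F, hF, g, r • h, by apply LinearMap.ext; intro c; simp⟩

section QuotientBySingleton

variable {A : Type*} [CommRing A] (a : A) (M : Type*) [AddCommGroup M] [Module A M]

theorem smul_one_quot_span_singleton : a • (1 : A ⧸ Ideal.span {a}) = 0 := by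
  rw [Algebra.smul_def, mul_one, Ideal.Quotient.algebraMap_eq, Ideal.Quotient.mk_singleton_self]

variable {a M} in
theorem quotSpanSingleton_linearMap_ext {f g : A ⧸ Ideal.span {a} →ₗ[A] M} (h : f 1 = g 1) :
    f = g :=
  Submodule.linearMap_qext _ (LinearMap.ext_ring h)

theorem apply_one_mem_ker_lsmul (f : A ⧸ Ideal.span {a} →ₗ[A] M) :
    f 1 ∈ LinearMap.ker (LinearMap.lsmul A M a) := by
  simp [← map_smul, smul_one_quot_span_singleton]

def quotSpanSingletonLinearMapEquiv :
    (A ⧸ Ideal.span {a} →ₗ[A] M) ≃ₗ[A] LinearMap.ker (LinearMap.lsmul A M a) :=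
  LinearEquiv.ofBijective
    ((LinearMap.applyₗ (1 : A ⧸ Ideal.span {a})).codRestrict _ (apply_one_mem_ker_lsmul a M))
    ⟨fun _ _ h => quotSpanSingleton_linearMap_ext (congrArg Subtype.val h),
      fun m => ⟨Submodule.liftQSpanSingleton a (LinearMap.toSpanSingleton A M m) m.2,
        Subtype.ext (one_smul A (m : M))⟩⟩

theorem quotSpanSingletonLinearMapEquiv_symm_apply_one
    (m : LinearMap.ker (LinearMap.lsmul A M a)) :
    (quotSpanSingletonLinearMapEquiv a M).symm m 1 = m :=
  congrArg Subtype.val ((quotSpanSingletonLinearMapEquiv a M).apply_symm_apply m)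

end QuotientBySingleton

variable {A : Type*} [CommRing A] {a : A} in
theorem exists_eq_smul_of_smul_eq_zero_of_free (ha : ∀ r : A, a * r = 0 → ∃ s, r = a * s)
    {F : Type*} [AddCommGroup F] [Module A F] [Module.Free A F] {v : F} (hv : a • v = 0) :
    ∃ w : F, v = a • w := by
  let b := Module.Free.chooseBasis A F
  have hcoord : ∀ i, a * b.repr v i = 0 := fun i => by
    simpa using congrArg (b.repr · i) hv
  choose s hs using fun i => ha _ (hcoord i)
  refine ⟨(b.repr v).sum fun i _ => s i • b i, ?_⟩
  conv_lhs => rw [← b.linearCombination_repr v, Finsupp.linearCombination_apply]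
  rw [Finsupp.smul_sum]
  exact Finsupp.sum_congr fun i _ => by rw [hs i, smul_smul]

theorem xcl_mul_self : xcl * xcl = 0 := by
  have h := AdjoinRoot.mk_self (f := (X ^ 2 : (ZMod 2)[X]))
  rw [map_pow, AdjoinRoot.mk_X] at h
  exact (sq xcl).symm.trans h

theorem exists_eq_xcl_mul_of_xcl_mul_eq_zero {r : ExtR} (h : xcl * r = 0) :
    ∃ s, r = xcl * s := by
  obtain ⟨p, rfl⟩ := AdjoinRoot.mk_surjective r
  rw [show xcl = AdjoinRoot.mk _ X from AdjoinRoot.mk_X.symm, ← map_mul,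
    AdjoinRoot.mk_eq_zero] at h
  obtain ⟨t, ht⟩ := h
  have hp : p = X * t := mul_left_cancel₀ X_ne_zero (by rw [ht]; ring)
  exact ⟨AdjoinRoot.mk _ t, by rw [hp, map_mul, AdjoinRoot.mk_X]⟩

theorem mem_freeFactor_iff {M : Type} [AddCommGroup M] [Module ExtR M] (f : F2R →ₗ[ExtR] M) :
    f ∈ freeFactor M ↔ f 1 ∈ LinearMap.range (mulX M) := by
  constructor
  · rintro ⟨F, hF, g, h, rfl⟩
    obtain ⟨w, hw⟩ := exists_eq_smul_of_smul_eq_zero_of_free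
      (fun _ => exists_eq_xcl_mul_of_xcl_mul_eq_zero) (apply_one_mem_ker_lsmul xcl F g)
    exact ⟨h w, by simp [mulX, hw]⟩
  · rintro ⟨m, hm⟩
    let g := (quotSpanSingletonLinearMapEquiv xcl ExtR).symm ⟨xcl, xcl_mul_self⟩
    refine ⟨ModuleCat.of ExtR ExtR, inferInstanceAs (Module.Free ExtR ExtR), g,
      LinearMap.toSpanSingleton ExtR M m, quotSpanSingleton_linearMap_ext ?_⟩
    have hg : g 1 = xcl := quotSpanSingletonLinearMapEquiv_symm_apply_one xcl ExtR _
    simp [hg, ← hm, mulX]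

def homF2REquivKerMulX (M : Type) [AddCommGroup M] [Module ExtR M] :
    (F2R →ₗ[ExtR] M) ≃ₗ[ExtR] LinearMap.ker (mulX M) :=
  quotSpanSingletonLinearMapEquiv xcl M

theorem map_freeFactor_homF2REquivKerMulX (M : Type) [AddCommGroup M] [Module ExtR M] :
    (freeFactor M).map (homF2REquivKerMulX M : _ →ₗ[ExtR] _) =
      (LinearMap.range (mulX M)).comap (LinearMap.ker (mulX M)).subtype := by
  ext v
  rw [Submodule.map_equiv_eq_comap_symm, Submodule.mem_comap, LinearEquiv.coe_coe,
    mem_freeFactor_iff, show (homF2REquivKerMulX M).symm v 1 = v from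
    quotSpanSingletonLinearMapEquiv_symm_apply_one xcl M v]
  rfl

/-- Stable homomorphisms out of the trivial module compute Margolis homology:
an `R`-linear map `f : 𝔽₂ → M` factors through a free `R`-module iff `f 1 ∈ x·M`,
and consequently the quotient of `Hom_R(𝔽₂, M)` by the maps factoring through a
free module is isomorphic (additively, equivalently `𝔽₂`-linearly) to `H(M)`. -/
theorem stable_homs_compute_margolis (M : Type) [AddCommGroup M] [Module ExtR M] :
    (∀ f : F2R →ₗ[ExtR] M,
      f ∈ freeFactor M ↔ f 1 ∈ LinearMap.range (mulX M)) ∧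
    Nonempty (((F2R →ₗ[ExtR] M) ⧸ freeFactor M) ≃+ MargH M) :=
  ⟨mem_freeFactor_iff, ⟨(Submodule.Quotient.equiv _ _ _
    (map_freeFactor_homF2REquivKerMulX M)).toAddEquiv⟩⟩
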